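/- arXiv:1808.00329 — 3 statements merged into one kernel-verified Lean document; each statement's English description precedes it below -/
import Mathlib

section
/- Adams' imaging satisfies the consistency condition ICK4': the revised conditional of X given Y=y equals the evidence: (P ∘_{aI} P')(X=x | Y=y) = P'(x) for all x, provided P(Y=y) > 0. -/
open Finset

/-- The image of a joint PMF `P` on `Ω_X × Ω_Y × Ω_Z` on the value `x`, at an event `α`,
via the closest-world function `γ((x'', y', z), x) = (x, y', z)`. -/
noncomputable def imgOn {ΩX ΩY ΩZ : Type*} [Fintype ΩX] [Fintype ΩY] [Fintype ΩZ]
    [DecidableEq ΩX] [DecidableEq ΩY] [DecidableEq ΩZ]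
    (P : ΩX × ΩY × ΩZ → ℝ) (x : ΩX) (α : Finset (ΩX × ΩY × ΩZ)) : ℝ :=
  ∑ ω' ∈ α, ∑ ω : ΩX × ΩY × ΩZ, P ω * (if (x, ω.2.1, ω.2.2) = ω' then 1 else 0)

/-- Adams' imaging: `(P ∘_{aI} P')(α) = P(α ∩ {Y ≠ y}) + Σ_x P°_x(α ∩ {Y = y}) · P'(x)`. -/
noncomputable def aimaging {ΩX ΩY ΩZ : Type*} [Fintype ΩX] [Fintype ΩY] [Fintype ΩZ]
    [DecidableEq ΩX] [DecidableEq ΩY] [DecidableEq ΩZ]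
    (P : ΩX × ΩY × ΩZ → ℝ) (y : ΩY) (P' : ΩX → ℝ) (α : Finset (ΩX × ΩY × ΩZ)) : ℝ :=
  (∑ ω ∈ α.filter (fun ω => ω.2.1 ≠ y), P ω) +
  ∑ x : ΩX, imgOn P x (α.filter (fun ω => ω.2.1 = y)) * P' x

lemma imgOn_eq {ΩX ΩY ΩZ : Type*} [Fintype ΩX] [Fintype ΩY] [Fintype ΩZ]
    [DecidableEq ΩX] [DecidableEq ΩY] [DecidableEq ΩZ]
    (P : ΩX × ΩY × ΩZ → ℝ) (x : ΩX) (α : Finset (ΩX × ΩY × ΩZ)) :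
    imgOn P x α = ∑ ω : ΩX × ΩY × ΩZ, P ω * (if (x, ω.2.1, ω.2.2) ∈ α then 1 else 0) := by
  unfold imgOn
  rw [Finset.sum_comm]
  refine Finset.sum_congr rfl fun ω _ => ?_
  rw [← Finset.mul_sum]
  congr 1
  rw [Finset.sum_ite_eq α]

/-- Adams' imaging satisfies ICK4': the revised conditional of `X` given `Y = y` equals the
evidence: `(P ∘_{aI} P')(X=x | Y=y) = P'(x)`, provided `P(Y=y) > 0`. -/
theorem aimaging_ICK4 {ΩX ΩY ΩZ : Type*} [Fintype ΩX] [Fintype ΩY] [Fintype ΩZ]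
    [DecidableEq ΩX] [DecidableEq ΩY] [DecidableEq ΩZ]
    (P : ΩX × ΩY × ΩZ → ℝ) (hP0 : ∀ ω, 0 ≤ P ω) (hP1 : ∑ ω, P ω = 1)
    (y : ΩY) (hy : 0 < ∑ ω ∈ Finset.univ.filter (fun ω => ω.2.1 = y), P ω)
    (P' : ΩX → ℝ) (hP'0 : ∀ x, 0 ≤ P' x) (hP'1 : ∑ x, P' x = 1) :
    ∀ x : ΩX,
      aimaging P y P' (Finset.univ.filter (fun ω => ω.1 = x ∧ ω.2.1 = y)) /
        aimaging P y P' (Finset.univ.filter (fun ω => ω.2.1 = y)) = P' x := by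
  intro x
  set Py : ℝ := ∑ ω ∈ Finset.univ.filter (fun ω : ΩX × ΩY × ΩZ => ω.2.1 = y), P ω with hPy
  have hPysum : Py = ∑ ω : ΩX × ΩY × ΩZ, P ω * (if ω.2.1 = y then 1 else 0) := by
    rw [hPy, Finset.sum_filter]
    exact Finset.sum_congr rfl fun ω _ => by by_cases h : ω.2.1 = y <;> simp [h]
  have hnum : aimaging P y P' (Finset.univ.filter (fun ω => ω.1 = x ∧ ω.2.1 = y))
      = Py * P' x := by
    unfold aimaging
    rw [Finset.filter_filter, Finset.filter_filter]
    have h1 : (Finset.univ.filter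
        (fun ω : ΩX × ΩY × ΩZ => (ω.1 = x ∧ ω.2.1 = y) ∧ ω.2.1 ≠ y)) = ∅ := by
      ext ω; simp
    rw [h1]
    have h2 : ∀ x' : ΩX, imgOn P x' (Finset.univ.filter
        (fun ω : ΩX × ΩY × ΩZ => (ω.1 = x ∧ ω.2.1 = y) ∧ ω.2.1 = y))
        = if x' = x then Py else 0 := by
      intro x'
      rw [imgOn_eq, hPysum]
      by_cases hx : x' = x
      · simp [hx]
      · simp [hx]
    simp only [h2, Finset.sum_empty, zero_add, ite_mul, zero_mul]
    rw [Finset.sum_ite_eq' Finset.univ x (fun x' => Py * P' x')]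
    simp
  have hden : aimaging P y P' (Finset.univ.filter (fun ω => ω.2.1 = y)) = Py := by
    unfold aimaging
    rw [Finset.filter_filter]
    have h1 : (Finset.univ.filter
        (fun ω : ΩX × ΩY × ΩZ => ω.2.1 = y ∧ ω.2.1 ≠ y)) = ∅ := by
      ext ω; simp
    rw [h1]
    have h2 : ∀ x' : ΩX, imgOn P x'
        ((Finset.univ.filter (fun ω : ΩX × ΩY × ΩZ => ω.2.1 = y)).filter
          (fun ω => ω.2.1 = y)) = Py := by
      intro x'
      rw [Finset.filter_filter, imgOn_eq, hPysum]
      simp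
    simp only [h2]
    rw [← Finset.mul_sum, hP'1]
    simp
  rw [hnum, hden, mul_comm, mul_div_assoc, div_self (ne_of_gt hy), mul_one]
end

section
/- Adams' imaging satisfies ICK3': the marginal of Y is preserved, i.e., (P ∘_{aI} P')(Y = y') = P(Y = y') for every y' ∈ Ω_Y. -/
open Finset

/-- Adams' imaging satisfies ICK3': the marginal of `Y` is preserved:
`(P ∘_{aI} P')(Y = y') = P(Y = y')` for every `y'`. -/
theorem aimaging_ICK3 {ΩX ΩY ΩZ : Type*} [Fintype ΩX] [Fintype ΩY] [Fintype ΩZ]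
    [DecidableEq ΩX] [DecidableEq ΩY] [DecidableEq ΩZ]
    (P : ΩX × ΩY × ΩZ → ℝ) (hP0 : ∀ ω, 0 ≤ P ω) (hP1 : ∑ ω, P ω = 1)
    (y : ΩY) (hy : 0 < ∑ ω ∈ Finset.univ.filter (fun ω => ω.2.1 = y), P ω)
    (P' : ΩX → ℝ) (hP'0 : ∀ x, 0 ≤ P' x) (hP'1 : ∑ x, P' x = 1) :
    ∀ y' : ΩY, aimaging P y P' (Finset.univ.filter (fun ω => ω.2.1 = y')) =
      ∑ ω ∈ Finset.univ.filter (fun ω => ω.2.1 = y'), P ω := by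
  intro y'
  have himg : ∀ x : ΩX, imgOn P x (Finset.univ.filter (fun ω : ΩX × ΩY × ΩZ => ω.2.1 = y)) =
      ∑ ω ∈ Finset.univ.filter (fun ω : ΩX × ΩY × ΩZ => ω.2.1 = y), P ω := by
    intro x
    unfold imgOn
    rw [Finset.sum_comm]
    have key : ∀ ω : ΩX × ΩY × ΩZ,
        (∑ ω' ∈ Finset.univ.filter (fun ω : ΩX × ΩY × ΩZ => ω.2.1 = y),
          P ω * (if (x, ω.2.1, ω.2.2) = ω' then 1 else 0)) =
        if ω.2.1 = y then P ω else 0 := by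
      intro ω
      rw [← Finset.mul_sum, Finset.sum_ite_eq]
      by_cases h : ω.2.1 = y <;> simp [h]
    simp only [key]
    exact (Finset.sum_filter _ _).symm
  by_cases hyy : y' = y
  · subst hyy
    unfold aimaging
    have h1 : (Finset.univ.filter (fun ω : ΩX × ΩY × ΩZ => ω.2.1 = y')).filter
        (fun ω => ω.2.1 ≠ y') = ∅ := by
      ext ω; simp
    have h2 : (Finset.univ.filter (fun ω : ΩX × ΩY × ΩZ => ω.2.1 = y')).filter
        (fun ω => ω.2.1 = y') = Finset.univ.filter (fun ω : ΩX × ΩY × ΩZ => ω.2.1 = y') := by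
      ext ω; simp
    rw [h1, h2]
    simp only [himg, Finset.sum_empty, zero_add, ← Finset.sum_mul, mul_comm]
    rw [hP'1, one_mul]
  · unfold aimaging
    have h1 : (Finset.univ.filter (fun ω : ΩX × ΩY × ΩZ => ω.2.1 = y')).filter
        (fun ω => ω.2.1 ≠ y) = Finset.univ.filter (fun ω : ΩX × ΩY × ΩZ => ω.2.1 = y') := by
      ext ω; simp only [Finset.mem_filter, Finset.mem_univ, true_and, and_iff_left_iff_imp]
      rintro rfl h; exact hyy h
    have h2 : (Finset.univ.filter (fun ω : ΩX × ΩY × ΩZ => ω.2.1 = y')).filter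
        (fun ω => ω.2.1 = y) = ∅ := by
      ext ω; simp only [Finset.mem_filter, Finset.mem_univ, true_and, Finset.notMem_empty,
        iff_false, not_and]
      rintro rfl h; exact hyy h
    rw [h1, h2]
    simp [imgOn]
end

section
/- Adams' imaging satisfies ICK2': for every y' ≠ y with P(Y=y') > 0 and every event α, (P ∘_{aI} P')(α | Y=y') = P(α | Y=y'). -/
open Finset

lemma aimaging_of_ne {OX OY OZ : Type*} [Fintype OX] [Fintype OY] [Fintype OZ]
    [DecidableEq OX] [DecidableEq OY] [DecidableEq OZ]
    (P : OX × OY × OZ → ℝ) (y y2 : OY) (hy : y2 ≠ y) (P2 : OX → ℝ)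
    (b : Finset (OX × OY × OZ)) :
    aimaging P y P2 (b.filter (fun w => w.2.1 = y2)) =
      ∑ w ∈ b.filter (fun w => w.2.1 = y2), P w := by
  unfold aimaging imgOn
  rw [Finset.filter_filter, Finset.filter_filter]
  have h1 : (b.filter fun w => w.2.1 = y2 ∧ w.2.1 ≠ y) = b.filter fun w => w.2.1 = y2 := by
    apply Finset.filter_congr
    intro w _
    simp only [eq_iff_iff, and_iff_left_iff_imp]
    rintro rfl; exact hy
  have h2 : (b.filter fun w => w.2.1 = y2 ∧ w.2.1 = y) = ∅ := by
    apply Finset.filter_false_of_mem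
    rintro w _ ⟨h, h'⟩
    exact hy (h ▸ h')
  rw [h1, h2]
  simp

/-- Adams' imaging satisfies ICK2': for every `y' ≠ y` with `P(Y=y') > 0` and every event
`α`, `(P ∘_{aI} P')(α | Y=y') = P(α | Y=y')`. -/
theorem aimaging_ICK2 {ΩX ΩY ΩZ : Type*} [Fintype ΩX] [Fintype ΩY] [Fintype ΩZ]
    [DecidableEq ΩX] [DecidableEq ΩY] [DecidableEq ΩZ]
    (P : ΩX × ΩY × ΩZ → ℝ) (hP0 : ∀ ω, 0 ≤ P ω) (hP1 : ∑ ω, P ω = 1)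
    (y : ΩY) (hy : 0 < ∑ ω ∈ Finset.univ.filter (fun ω => ω.2.1 = y), P ω)
    (P' : ΩX → ℝ) (hP'0 : ∀ x, 0 ≤ P' x) (hP'1 : ∑ x, P' x = 1) :
    ∀ y' : ΩY, y' ≠ y → 0 < ∑ ω ∈ Finset.univ.filter (fun ω => ω.2.1 = y'), P ω →
      ∀ α : Finset (ΩX × ΩY × ΩZ),
        aimaging P y P' (α.filter (fun ω => ω.2.1 = y')) /
            aimaging P y P' (Finset.univ.filter (fun ω => ω.2.1 = y')) =
          (∑ ω ∈ α.filter (fun ω => ω.2.1 = y'), P ω) /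
            (∑ ω ∈ Finset.univ.filter (fun ω => ω.2.1 = y'), P ω) := by
  intro y2 hne hpos a
  rw [aimaging_of_ne P y y2 hne P' a, aimaging_of_ne P y y2 hne P' Finset.univ]
end
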